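/- arXiv:1512.00276 — 3 statements merged into one kernel-verified Lean document; each statement's English description precedes it below -/
import Mathlib

section
/- Let t ∈ ℝ with t ≥ 4. Define x₁ = √((t² + t·√(t² − 16))/2) and x₂ = √((t² − t·√(t² − 16))/2). Then x₁·x₂ = 2t and x₁² + x₂² = t². -/
/-! The radicands `(t² ± t√(t² - 16))/2` are the two roots of `X² - t² X + 4t²`, so they are
nonnegative with sum `t²` and product `4t²`; taking square roots gives the two identities. -/

namespace Real

theorem sqrt_half_add_mul_sqrt_half_sub {p s : ℝ} (hsp : s ≤ p) :
    √((p + s) / 2) * √((p - s) / 2) = √(p ^ 2 - s ^ 2) / 2 := by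
  rw [← sqrt_mul' _ (by linarith), show (p + s) / 2 * ((p - s) / 2) = (p ^ 2 - s ^ 2) / 2 ^ 2 by
    ring, sqrt_div' _ (by positivity), sqrt_sq zero_le_two]

theorem sq_sqrt_half_add_add_sq_sqrt_half_sub {p s : ℝ} (hs : |s| ≤ p) :
    √((p + s) / 2) ^ 2 + √((p - s) / 2) ^ 2 = p := by
  obtain ⟨hneg, hpos⟩ := abs_le.mp hs
  rw [sq_sqrt (by linarith), sq_sqrt (by linarith)]
  ring

end Real

/-- For t ≥ 4, the explicit values x₁ = √((t² + t√(t²−16))/2) and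
x₂ = √((t² − t√(t²−16))/2) satisfy x₁x₂ = 2t and x₁² + x₂² = t². -/
theorem annulus_modulus_resolution (t : ℝ) (ht : 4 ≤ t)
    (x₁ x₂ : ℝ)
    (hx₁ : x₁ = Real.sqrt ((t ^ 2 + t * Real.sqrt (t ^ 2 - 16)) / 2))
    (hx₂ : x₂ = Real.sqrt ((t ^ 2 - t * Real.sqrt (t ^ 2 - 16)) / 2)) :
    x₁ * x₂ = 2 * t ∧ x₁ ^ 2 + x₂ ^ 2 = t ^ 2 := by
  have ht₀ : 0 ≤ t := by linarith
  have hdisc : √(t ^ 2 - 16) ^ 2 = t ^ 2 - 16 := Real.sq_sqrt (by nlinarith)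
  have hsqrt_le : √(t ^ 2 - 16) ≤ t :=
    Real.sqrt_le_iff.mpr ⟨ht₀, by linarith⟩
  have hs_le : |t * √(t ^ 2 - 16)| ≤ t ^ 2 := by
    rw [abs_of_nonneg (by positivity)]
    exact (mul_le_mul_of_nonneg_left hsqrt_le ht₀).trans_eq (sq t).symm
  have hprod : (t ^ 2) ^ 2 - (t * √(t ^ 2 - 16)) ^ 2 = (4 * t) ^ 2 := by
    rw [mul_pow, hdisc]
    ring
  subst hx₁ hx₂
  refine ⟨?_, Real.sq_sqrt_half_add_add_sq_sqrt_half_sub hs_le⟩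
  rw [Real.sqrt_half_add_mul_sqrt_half_sub (le_of_abs_le hs_le), hprod,
    Real.sqrt_sq (by positivity)]
  ring
end

section
/- Let t ∈ ℝ with t > 0, and let e ∈ M₄(ℝ) = M₂(ℝ) ⊗ M₂(ℝ) be the Jones projection e = (1/(1+t))·(E₁₁ ⊗ E₂₂ + t·E₂₂ ⊗ E₁₁ + √t·(E₁₂ ⊗ E₂₁ + E₂₁ ⊗ E₁₂)). In M₈(ℝ) = M₂(ℝ) ⊗ M₂(ℝ) ⊗ M₂(ℝ), set e₁ = e ⊗ I₂ and e₂ = I₂ ⊗ e, where I₂ is the 2×2 identity matrix. Then e₁·e₂·e₁ = (t/(1+t)²)·e₁ and e₂·e₁·e₂ = (t/(1+t)²)·e₂. -/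
open Matrix Kronecker

/-!
For `X : Matrix n n R` put `ξ = vec X` and `e = ξ ξᵀ`. After ampliation, `e ⊗ 1 = A Aᵀ` and
`1 ⊗ e = B Bᵀ` for two explicit `A, B : Matrix ((n × n) × n) n R` with `Aᵀ B = X²`. Hence
`e₁ e₂ e₁ = A X² (X²)ᵀ Aᵀ` and `e₂ e₁ e₂ = B (X²)ᵀ X² Bᵀ`, so the Temperley–Lieb relations hold
whenever `X²` is a multiple of an orthogonal matrix. The Jones projection is `(1 + t)⁻¹ ξ ξᵀ` for
`X = !![0, √t; 1, 0]`, and `X² = √t • 1`.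
-/

namespace JonesProjection

variable {R n : Type*} [CommRing R] [DecidableEq n]

def rankOne (X : Matrix n n R) : Matrix (n × n) (n × n) R :=
  vecMulVec (vec X) (vec X)

def shift (a : Matrix (n × n) (n × n) R) : Matrix ((n × n) × n) ((n × n) × n) R :=
  reindex (Equiv.prodAssoc n n n).symm (Equiv.prodAssoc n n n).symm (1 ⊗ₖ a)

theorem shift_smul (c : R) (a : Matrix (n × n) (n × n) R) : shift (c • a) = c • shift a := by
  rw [shift, kronecker_smul]
  rfl

variable [Fintype n]

def leftFactor (X : Matrix n n R) : Matrix ((n × n) × n) n R :=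
  of fun p d => vec X p.1 * (1 : Matrix n n R) p.2 d

def rightFactor (X : Matrix n n R) : Matrix ((n × n) × n) n R :=
  of fun p d => (1 : Matrix n n R) p.1.1 d * vec X (p.1.2, p.2)

theorem leftFactor_mul_transpose (X : Matrix n n R) :
    leftFactor X * (leftFactor X)ᵀ = rankOne X ⊗ₖ 1 := by
  ext ⟨⟨a, b⟩, c⟩ ⟨⟨a', b'⟩, c'⟩
  simp [leftFactor, rankOne, mul_apply, one_apply, vecMulVec_apply]

theorem rightFactor_mul_transpose (X : Matrix n n R) :
    rightFactor X * (rightFactor X)ᵀ = shift (rankOne X) := by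
  ext ⟨⟨a, b⟩, c⟩ ⟨⟨a', b'⟩, c'⟩
  simp [rightFactor, rankOne, shift, mul_apply, one_apply, vecMulVec_apply]

theorem transpose_leftFactor_mul_rightFactor (X : Matrix n n R) :
    (leftFactor X)ᵀ * rightFactor X = X * X := by
  ext c q
  simp [leftFactor, rightFactor, mul_apply, one_apply, Fintype.sum_prod_type, vec]
  exact Finset.sum_congr rfl fun _ _ => mul_comm _ _

theorem rankOne_kronecker_one_mul_shift_mul {X : Matrix n n R} {τ : R}
    (h : (X * X) * (X * X)ᵀ = τ • 1) :
    (rankOne X ⊗ₖ 1) * shift (rankOne X) * (rankOne X ⊗ₖ 1) = τ • (rankOne X ⊗ₖ 1) := by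
  rw [← leftFactor_mul_transpose, ← rightFactor_mul_transpose]
  calc leftFactor X * (leftFactor X)ᵀ * (rightFactor X * (rightFactor X)ᵀ) *
        (leftFactor X * (leftFactor X)ᵀ)
      = leftFactor X * (((leftFactor X)ᵀ * rightFactor X) * ((leftFactor X)ᵀ * rightFactor X)ᵀ) *
          (leftFactor X)ᵀ := by simp only [transpose_mul, transpose_transpose, Matrix.mul_assoc]
    _ = τ • (leftFactor X * (leftFactor X)ᵀ) := by
      rw [transpose_leftFactor_mul_rightFactor, h, Matrix.mul_smul, Matrix.mul_one, Matrix.smul_mul]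

theorem shift_rankOne_mul_kronecker_one_mul {X : Matrix n n R} {τ : R}
    (h : (X * X)ᵀ * (X * X) = τ • 1) :
    shift (rankOne X) * (rankOne X ⊗ₖ 1) * shift (rankOne X) = τ • shift (rankOne X) := by
  rw [← leftFactor_mul_transpose, ← rightFactor_mul_transpose]
  calc rightFactor X * (rightFactor X)ᵀ * (leftFactor X * (leftFactor X)ᵀ) *
        (rightFactor X * (rightFactor X)ᵀ)
      = rightFactor X * (((leftFactor X)ᵀ * rightFactor X)ᵀ * ((leftFactor X)ᵀ * rightFactor X)) *
          (rightFactor X)ᵀ := by simp only [transpose_mul, transpose_transpose, Matrix.mul_assoc]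
    _ = τ • (rightFactor X * (rightFactor X)ᵀ) := by
      rw [transpose_leftFactor_mul_rightFactor, h, Matrix.mul_smul, Matrix.mul_one, Matrix.smul_mul]

theorem smul_mul_smul_mul_smul {m : Type*} [Fintype m] {P Q : Matrix m m R} {τ : R}
    (c : R) (h : P * Q * P = τ • P) : (c • P) * (c • Q) * (c • P) = (c ^ 2 * τ) • (c • P) := by
  simp only [Matrix.smul_mul, Matrix.mul_smul, h, smul_smul]
  ring_nf

end JonesProjection

open JonesProjection

/-- The shifted Jones projections e₁ = e ⊗ 1 and e₂ = 1 ⊗ e (suitably reassociated) in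
M₂(ℝ) ⊗ M₂(ℝ) ⊗ M₂(ℝ) satisfy the Temperley–Lieb relations
e₁e₂e₁ = (t/(1+t)²)e₁ and e₂e₁e₂ = (t/(1+t)²)e₂. -/
theorem jones_projections_temperley_lieb (t : ℝ) (ht : 0 < t)
    (E : Fin 2 → Fin 2 → Matrix (Fin 2) (Fin 2) ℝ)
    (hE : ∀ i j, E i j = Matrix.single i j 1)
    (e : Matrix (Fin 2 × Fin 2) (Fin 2 × Fin 2) ℝ)
    (he : e = (1 / (1 + t)) •
      (E 0 0 ⊗ₖ E 1 1 + t • (E 1 1 ⊗ₖ E 0 0) +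
        Real.sqrt t • (E 0 1 ⊗ₖ E 1 0 + E 1 0 ⊗ₖ E 0 1)))
    (e₁ e₂ : Matrix ((Fin 2 × Fin 2) × Fin 2) ((Fin 2 × Fin 2) × Fin 2) ℝ)
    (he₁ : e₁ = e ⊗ₖ (1 : Matrix (Fin 2) (Fin 2) ℝ))
    (he₂ : e₂ = Matrix.reindex (Equiv.prodAssoc (Fin 2) (Fin 2) (Fin 2)).symm
        (Equiv.prodAssoc (Fin 2) (Fin 2) (Fin 2)).symm
        ((1 : Matrix (Fin 2) (Fin 2) ℝ) ⊗ₖ e)) :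
    e₁ * e₂ * e₁ = (t / (1 + t) ^ 2) • e₁ ∧
      e₂ * e₁ * e₂ = (t / (1 + t) ^ 2) • e₂ := by
  have hst : √t * √t = t := Real.mul_self_sqrt ht.le
  set X : Matrix (Fin 2) (Fin 2) ℝ := !![0, √t; 1, 0]
  have hXX : X * X = √t • 1 := by
    ext i j; fin_cases i <;> fin_cases j <;> simp [X]
  have hτ₁ : (X * X) * (X * X)ᵀ = t • 1 := by simp [hXX, smul_smul, hst]
  have hτ₂ : (X * X)ᵀ * (X * X) = t • 1 := by simp [hXX, smul_smul, hst]
  have he' : e = (1 / (1 + t)) • rankOne X := by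
    rw [he]; congr 1
    ext ⟨a, b⟩ ⟨c, d⟩
    fin_cases a <;> fin_cases b <;> fin_cases c <;> fin_cases d <;>
      simp [hE, X, rankOne, vecMulVec_apply, vec_eq_uncurry, hst]
  have hscalar : (1 / (1 + t)) ^ 2 * t = t / (1 + t) ^ 2 := by rw [one_div, inv_pow]; ring
  constructor
  · rw [he₁, he₂, he', smul_kronecker, ← shift, shift_smul,
      smul_mul_smul_mul_smul _ (rankOne_kronecker_one_mul_shift_mul hτ₁), hscalar]
  · rw [he₁, he₂, he', smul_kronecker, ← shift, shift_smul,
      smul_mul_smul_mul_smul _ (shift_rankOne_mul_kronecker_one_mul hτ₂), hscalar]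
end

section
/- Let p be a nonzero polynomial with integer coefficients in one variable X. Then p(x) > 0 for every real x with 0 < x < 1 if and only if there exist a natural number n and nonnegative integers c₀, c₁, …, c_n such that p = Σ_{k=0}^{n} c_k · X^k · (1 − X)^{n−k}. -/
/-!
Factor `p = X ^ a * (1 - X) ^ b * q` with `q 0 ≠ 0` and `q 1 ≠ 0`. Then `q` is positive on the
closed interval `[0, 1]`, hence bounded below there by some `ε > 0`. Multiplying `X ^ j` by
`(X + (1 - X)) ^ (N - j)` expands `q` in the basis `X ^ k * (1 - X) ^ (N - k)`, with coefficients
`∑ j, q_j * C(N - j, k - j) = C(N, k) * ∑ j, q_j * C(k, j) / C(N, j)`. Since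
`C(k, j) / C(N, j) = ∏ i < j, (k - i) / (N - i)` is within `O(1 / N)` of `(k / N) ^ j`, the
`k`-th coefficient is `C(N, k) * (q (k / N) + O(1 / N)) > 0` once `N` is large. Multiplying back by
`X ^ a * (1 - X) ^ b` only shifts coefficients. Conversely, every Bernstein monomial is positive
on `(0, 1)`.
-/

open Polynomial Finset Filter

section

variable {R : Type*} [CommRing R]

theorem pow_eq_sum_choose_mul_pow_mul_one_sub_pow (x : R) {j N : ℕ} (hj : j ≤ N) :
    x ^ j = ∑ k ∈ Ico j (N + 1), ((N - j).choose (k - j) : R) * x ^ k * (1 - x) ^ (N - k) := by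
  rw [sum_Ico_eq_sum_range, show N + 1 - j = N - j + 1 by omega]
  calc x ^ j = x ^ j * (x + (1 - x)) ^ (N - j) := by simp
    _ = _ := by
      rw [add_pow, mul_sum]
      refine sum_congr rfl fun m hm => ?_
      rw [mem_range] at hm
      rw [Nat.add_sub_cancel_left, show N - (j + m) = N - j - m by omega, pow_add]
      ring

theorem exists_eq_X_pow_mul_one_sub_X_pow_mul {p : R[X]} (hp : p ≠ 0) :
    ∃ (a b : ℕ) (q : R[X]),
      p = X ^ a * (1 - X) ^ b * q ∧ q.eval 0 ≠ 0 ∧ q.eval 1 ≠ 0 := by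
  obtain ⟨q₀, hp₀, hq₀⟩ := exists_eq_pow_rootMultiplicity_mul_and_not_dvd p hp 0
  have hq₀0 : q₀ ≠ 0 := by rintro rfl; exact hq₀ (dvd_zero _)
  obtain ⟨q, hq₀q, hq⟩ := exists_eq_pow_rootMultiplicity_mul_and_not_dvd q₀ hq₀0 1
  rw [dvd_iff_isRoot] at hq₀ hq
  set b := q₀.rootMultiplicity 1
  -- `X - 1 = (-1) * (1 - X)`, so the sign `(-1) ^ b` moves into the cofactor.
  refine ⟨p.rootMultiplicity 0, b, (-1) ^ b * q, ?_, ?_, ?_⟩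
  · conv_lhs => rw [hp₀, hq₀q]
    rw [map_zero, map_one, sub_zero, show (X - 1 : R[X]) = -1 * (1 - X) by ring, mul_pow]
    ring
  · rw [hq₀q] at hq₀
    simpa [IsRoot] using hq₀
  · simpa [IsRoot, (isUnit_neg_one.pow b).mul_right_eq_zero] using hq

/-- The coefficient of `X ^ k * (1 - X) ^ (N - k)` when `q`, of degree at most `N`, is expanded
in that basis. -/
def bernsteinCoeff (q : R[X]) (N k : ℕ) : R :=
  ∑ j ∈ range (k + 1), q.coeff j * (N - j).choose (k - j)

theorem sum_bernsteinCoeff {q : R[X]} {N : ℕ} (hN : q.natDegree ≤ N) :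
    ∑ k ∈ range (N + 1), C (bernsteinCoeff q N k) * X ^ k * (1 - X) ^ (N - k) = q := by
  conv_rhs => rw [as_sum_range' q (N + 1) (by omega)]
  calc _ = ∑ k ∈ range (N + 1), ∑ j ∈ range (k + 1),
        C (q.coeff j) * (((N - j).choose (k - j) : R[X]) * X ^ k * (1 - X) ^ (N - k)) := by
        simp only [bernsteinCoeff, map_sum, sum_mul, map_mul, map_natCast, mul_assoc]
    _ = ∑ j ∈ range (N + 1), ∑ k ∈ Ico j (N + 1),
        C (q.coeff j) * (((N - j).choose (k - j) : R[X]) * X ^ k * (1 - X) ^ (N - k)) :=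
        sum_comm' fun k j => by simp only [mem_range, mem_Ico]; omega
    _ = _ := sum_congr rfl fun j hj => by
        rw [← mul_sum, ← C_mul_X_pow_eq_monomial,
          ← pow_eq_sum_choose_mul_pow_mul_one_sub_pow _ (Nat.lt_succ_iff.1 (mem_range.1 hj))]

def IsBernsteinNonneg (p : R[X]) : Prop :=
  ∃ (n : ℕ) (c : ℕ → ℕ),
    p = ∑ k ∈ range (n + 1), C (c k : R) * X ^ k * (1 - X) ^ (n - k)

namespace IsBernsteinNonneg

theorem X_mul {p : R[X]} (hp : IsBernsteinNonneg p) : IsBernsteinNonneg (X * p) := by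
  obtain ⟨n, c, rfl⟩ := hp
  refine ⟨n + 1, fun k => if k = 0 then 0 else c (k - 1), ?_⟩
  conv_rhs => rw [sum_range_succ']
  simp only [if_true, Nat.cast_zero, map_zero, zero_mul, add_zero, Nat.add_one_ne_zero, if_false,
    Nat.add_sub_cancel, Nat.add_sub_add_right, mul_sum]
  exact sum_congr rfl fun k _ => by ring

theorem one_sub_X_mul {p : R[X]} (hp : IsBernsteinNonneg p) :
    IsBernsteinNonneg ((1 - X) * p) := by
  obtain ⟨n, c, rfl⟩ := hp
  refine ⟨n + 1, fun k => if k ≤ n then c k else 0, ?_⟩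
  conv_rhs => rw [sum_range_succ]
  simp only [Nat.not_succ_le_self, if_false, Nat.cast_zero, map_zero, zero_mul, add_zero, mul_sum]
  refine sum_congr rfl fun k hk => ?_
  have hk : k ≤ n := Nat.lt_succ_iff.mp (mem_range.mp hk)
  rw [if_pos hk, show n + 1 - k = n - k + 1 by omega]
  ring

theorem X_pow_mul {p : R[X]} (hp : IsBernsteinNonneg p) (a : ℕ) :
    IsBernsteinNonneg (X ^ a * p) := by
  induction a with
  | zero => simpa using hp
  | succ a ih => simpa only [pow_succ', mul_assoc] using ih.X_mul

theorem one_sub_X_pow_mul {p : R[X]} (hp : IsBernsteinNonneg p) (b : ℕ) :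
    IsBernsteinNonneg ((1 - X) ^ b * p) := by
  induction b with
  | zero => simpa using hp
  | succ b ih => simpa only [pow_succ', mul_assoc] using ih.one_sub_X_mul

end IsBernsteinNonneg

end

theorem pos_on_Icc_of_pos_on_Ioo {f : ℝ → ℝ} (hf : Continuous f) {a b : ℝ} (hab : a < b)
    (h : ∀ x ∈ Set.Ioo a b, 0 < f x) (ha : f a ≠ 0) (hb : f b ≠ 0) :
    ∀ x ∈ Set.Icc a b, 0 < f x := by
  have hnonneg : Set.Icc a b ⊆ {x | 0 ≤ f x} := by
    rw [← closure_Ioo hab.ne]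
    exact closure_minimal (fun x hx => (h x hx).le) (isClosed_le continuous_const hf)
  intro x hx
  rcases Set.eq_endpoints_or_mem_Ioo_of_mem_Icc hx with rfl | rfl | hx'
  · exact (hnonneg hx).lt_of_ne' ha
  · exact (hnonneg hx).lt_of_ne' hb
  · exact h x hx'

theorem abs_prod_sub_prod_le {ι R : Type*} [CommRing R] [LinearOrder R]
    [IsStrictOrderedRing R] (s : Finset ι) {u v : ι → R} (hu : ∀ i ∈ s, |u i| ≤ 1)
    (hv : ∀ i ∈ s, |v i| ≤ 1) :
    |∏ i ∈ s, u i - ∏ i ∈ s, v i| ≤ ∑ i ∈ s, |u i - v i| := by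
  induction s using Finset.cons_induction with
  | empty => simp
  | cons a s _ ih =>
    simp only [mem_cons, forall_eq_or_imp] at hu hv
    rw [prod_cons, prod_cons, sum_cons]
    have hs : |∏ i ∈ s, u i| ≤ 1 := by
      rw [abs_prod]; exact prod_le_one (fun _ _ => abs_nonneg _) hu.2
    calc |u a * ∏ i ∈ s, u i - v a * ∏ i ∈ s, v i|
        = |(u a - v a) * ∏ i ∈ s, u i + v a * (∏ i ∈ s, u i - ∏ i ∈ s, v i)| := by
          ring_nf
      _ ≤ |u a - v a| * |∏ i ∈ s, u i| + |v a| * |∏ i ∈ s, u i - ∏ i ∈ s, v i| := by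
        rw [← abs_mul, ← abs_mul]; exact abs_add_le _ _
      _ ≤ |u a - v a| * 1 + 1 * ∑ i ∈ s, |u i - v i| := by
        gcongr
        · exact hv.1
        · exact ih hu.2 hv.2
      _ = _ := by ring

theorem cast_choose_div_cast_choose {K : Type*} [Field K] [CharZero K] (k : ℕ) {N j : ℕ}
    (hj : j ≤ N) :
    (k.choose j : K) / N.choose j = ∏ i ∈ range j, ((k : K) - i) / ((N : K) - i) := by
  have hdesc (n : ℕ) : (n.descFactorial j : K) = ∏ i ∈ range j, ((n : K) - i) := by
    rw [← descPochhammer_eval_eq_descFactorial, descPochhammer_eval_eq_prod_range]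
  have hN : (N.choose j : K) ≠ 0 := Nat.cast_ne_zero.mpr (Nat.choose_pos hj).ne'
  have hfact : (j.factorial : K) ≠ 0 := Nat.cast_ne_zero.mpr j.factorial_ne_zero
  rw [prod_div_distrib, ← hdesc, ← hdesc, Nat.descFactorial_eq_factorial_mul_choose,
    Nat.descFactorial_eq_factorial_mul_choose, Nat.cast_mul, Nat.cast_mul,
    mul_div_mul_left _ _ hfact]

section

variable {d N k i : ℕ}

-- `2 * d ≤ N` keeps the factors `(k - i) / (N - i)` of `k.choose j / N.choose j` in `[-1, 1]`,
-- also those with `k < i`.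
theorem abs_sub_div_sub_le_one (hi : i < d) (hdN : 2 * d ≤ N) (hk : k ≤ N) :
    |((k : ℝ) - i) / ((N : ℝ) - i)| ≤ 1 := by
  have hi : (i : ℝ) < d := by exact_mod_cast hi
  have hdN : 2 * (d : ℝ) ≤ N := by exact_mod_cast hdN
  have hk : (k : ℝ) ≤ N := by exact_mod_cast hk
  have hNi : (0 : ℝ) < N - i := by linarith
  rw [abs_div, abs_of_pos hNi, div_le_one hNi, abs_le]
  constructor <;> linarith [(k.cast_nonneg : (0 : ℝ) ≤ k)]

theorem abs_sub_div_sub_sub_div_le (hi : i < d) (hdN : 2 * d ≤ N) (hk : k ≤ N) :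
    |((k : ℝ) - i) / ((N : ℝ) - i) - k / N| ≤ 2 * d / N := by
  have hi0 : (0 : ℝ) ≤ i := i.cast_nonneg
  have hi : (i : ℝ) < d := by exact_mod_cast hi
  have hdN : 2 * (d : ℝ) ≤ N := by exact_mod_cast hdN
  have hk : (k : ℝ) ≤ N := by exact_mod_cast hk
  have hNi : (0 : ℝ) < N - i := by linarith
  have hN : (0 : ℝ) < N := by linarith
  rw [div_sub_div _ _ hNi.ne' hN.ne', abs_div, abs_of_pos (mul_pos hNi hN),
    div_le_div_iff₀ (mul_pos hNi hN) hN,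
    show (k - i : ℝ) * N - (N - i) * k = -(i * (N - k)) by ring,
    abs_neg, abs_of_nonneg (mul_nonneg hi0 (sub_nonneg.2 hk))]
  have : (i : ℝ) * (N - k) ≤ 2 * d * (N - i) := by nlinarith
  nlinarith

theorem abs_choose_div_choose_sub_pow_le {j : ℕ} (hj : j ≤ d) (hdN : 2 * d ≤ N)
    (hk : k ≤ N) :
    |(k.choose j : ℝ) / N.choose j - ((k : ℝ) / N) ^ j| ≤ 2 * d ^ 2 / N := by
  have hlt : ∀ i ∈ range j, i < d := fun i hi => (mem_range.1 hi).trans_le hj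
  have ht : |(k : ℝ) / N| ≤ 1 := by
    rw [abs_of_nonneg (by positivity)]
    exact div_le_one_of_le₀ (by exact_mod_cast hk) N.cast_nonneg
  rw [cast_choose_div_cast_choose k (hj.trans (by omega)), pow_eq_prod_const]
  calc _ ≤ ∑ i ∈ range j, |((k : ℝ) - i) / ((N : ℝ) - i) - k / N| :=
        abs_prod_sub_prod_le _ (fun i hi => abs_sub_div_sub_le_one (hlt i hi) hdN hk) fun _ _ => ht
    _ ≤ ∑ _i ∈ range j, (2 * d / N : ℝ) :=
        sum_le_sum fun i hi => abs_sub_div_sub_sub_div_le (hlt i hi) hdN hk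
    _ ≤ d * (2 * d / N : ℝ) := by
        rw [sum_const, card_range, nsmul_eq_mul]
        gcongr
    _ = 2 * d ^ 2 / N := by ring

end

theorem abs_sum_coeff_mul_choose_div_choose_sub_aeval_le (q : ℤ[X]) {N k : ℕ}
    (hdN : 2 * q.natDegree ≤ N) (hk : k ≤ N) :
    |∑ j ∈ range (N + 1), (q.coeff j : ℝ) * (k.choose j / N.choose j) -
        aeval ((k : ℝ) / N) q|
      ≤ (q.sum fun _ a => |(a : ℝ)|) * (2 * q.natDegree ^ 2 / N) := by
  have hdeg : q.natDegree < N + 1 := by omega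
  rw [aeval_eq_sum_range' hdeg, sum_over_range' q (by simp) (N + 1) hdeg, ← sum_sub_distrib,
    sum_mul]
  refine (abs_sum_le_sum_abs _ _).trans (sum_le_sum fun j _ => ?_)
  rw [zsmul_eq_mul, ← mul_sub, abs_mul]
  by_cases hj : j ≤ q.natDegree
  · exact mul_le_mul_of_nonneg_left (abs_choose_div_choose_sub_pow_le hj hdN hk) (abs_nonneg _)
  · simp [coeff_eq_zero_of_natDegree_lt (not_le.mp hj)]

theorem cast_bernsteinCoeff (q : ℤ[X]) {N k : ℕ} (hk : k ≤ N) :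
    ((bernsteinCoeff q N k : ℤ) : ℝ) =
      N.choose k * ∑ j ∈ range (N + 1), (q.coeff j : ℝ) * (k.choose j / N.choose j) := by
  have hsub : range (k + 1) ⊆ range (N + 1) := range_subset_range.2 (by omega)
  rw [bernsteinCoeff, Int.cast_sum, mul_sum, ← sum_subset hsub fun j _ hj => by
    rw [Nat.choose_eq_zero_of_lt (n := k) (by simpa using hj)]; simp]
  refine sum_congr rfl fun j hj => ?_
  have hjk : j ≤ k := Nat.lt_succ_iff.1 (mem_range.1 hj)
  have hchoose : (N.choose j : ℝ) ≠ 0 := Nat.cast_ne_zero.2 (Nat.choose_pos (hjk.trans hk)).ne'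
  have hmul : (N.choose k : ℝ) * k.choose j = N.choose j * (N - j).choose (k - j) := by
    exact_mod_cast Nat.choose_mul hjk
  rw [Int.cast_mul, Int.cast_natCast, mul_div_assoc', mul_div_assoc', eq_div_iff hchoose]
  linear_combination -(q.coeff j : ℝ) * hmul

theorem eventually_forall_bernsteinCoeff_pos {q : ℤ[X]}
    (hq : ∀ x ∈ Set.Icc (0 : ℝ) 1, 0 < aeval x q) :
    ∀ᶠ N in atTop, ∀ k ≤ N, 0 < bernsteinCoeff q N k := by
  obtain ⟨x₀, hx₀, hmin⟩ := isCompact_Icc.exists_isMinOn (Set.nonempty_Icc.2 zero_le_one)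
    (q.continuous_aeval (A := ℝ)).continuousOn
  set A : ℝ := q.sum fun _ a => |(a : ℝ)|
  filter_upwards [eventually_ge_atTop (2 * q.natDegree),
    (tendsto_const_div_atTop_nhds_zero_nat (A * (2 * q.natDegree ^ 2))).eventually
      (gt_mem_nhds (hq x₀ hx₀))] with N hdN hsmall k hk
  have hkN : (k : ℝ) / N ∈ Set.Icc (0 : ℝ) 1 :=
    ⟨by positivity, div_le_one_of_le₀ (by exact_mod_cast hk) N.cast_nonneg⟩
  have hmin' : aeval x₀ q ≤ aeval ((k : ℝ) / N) q := hmin hkN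
  have hest := abs_le.1 (abs_sum_coeff_mul_choose_div_choose_sub_aeval_le q hdN hk)
  rw [← mul_div_assoc] at hest
  have hpos : (0 : ℝ) < bernsteinCoeff q N k := by
    rw [cast_bernsteinCoeff q hk]
    exact mul_pos (Nat.cast_pos.2 (Nat.choose_pos hk)) (by linarith [hest.1])
  exact_mod_cast hpos

theorem isBernsteinNonneg_of_pos_on_Icc {q : ℤ[X]}
    (hq : ∀ x ∈ Set.Icc (0 : ℝ) 1, 0 < aeval x q) :
    IsBernsteinNonneg q := by
  obtain ⟨N, hN, hpos⟩ :=
    ((eventually_ge_atTop q.natDegree).and (eventually_forall_bernsteinCoeff_pos hq)).exists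
  refine ⟨N, fun k => (bernsteinCoeff q N k).toNat, ?_⟩
  conv_lhs => rw [← sum_bernsteinCoeff hN]
  exact sum_congr rfl fun k hk => by
    rw [Int.toNat_of_nonneg (hpos k (Nat.lt_succ_iff.1 (mem_range.1 hk))).le]

theorem IsBernsteinNonneg.aeval_pos {p : ℤ[X]} (h : IsBernsteinNonneg p) (hp : p ≠ 0) {x : ℝ}
    (hx : x ∈ Set.Ioo 0 1) : 0 < aeval x p := by
  obtain ⟨n, c, rfl⟩ := h
  obtain ⟨k, hk, hck⟩ : ∃ k ∈ range (n + 1), c k ≠ 0 := by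
    by_contra! hc
    exact hp (sum_eq_zero fun k hk => by simp [hc k hk])
  have hterm (i : ℕ) : 0 < x ^ i * (1 - x) ^ (n - i) :=
    mul_pos (pow_pos hx.1 i) (pow_pos (sub_pos.2 hx.2) (n - i))
  simp only [map_sum, map_mul, map_pow, aeval_X, map_sub, map_one, map_natCast, mul_assoc]
  exact sum_pos' (fun i _ => mul_nonneg (Nat.cast_nonneg _) (hterm i).le)
    ⟨k, hk, mul_pos (Nat.cast_pos.2 (Nat.pos_of_ne_zero hck)) (hterm k)⟩

/-- A nonzero integer polynomial is strictly positive on the open interval (0,1) iff it is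
a finite nonnegative-integer combination of the Bernstein monomials X^k(1−X)^(n−k).
This computes the positive cone of the dimension group of the GICAR algebra:
(K₀, K₀⁺) ≅ (ℤ[x], P⁺(0,1)). -/
theorem pos_on_unit_interval_iff_bernstein (p : Polynomial ℤ) (hp : p ≠ 0) :
    (∀ x : ℝ, 0 < x → x < 1 → 0 < Polynomial.aeval x p) ↔
      ∃ (n : ℕ) (c : ℕ → ℕ),
        p = ∑ k ∈ Finset.range (n + 1),
          Polynomial.C ((c k : ℤ)) * X ^ k * (1 - X) ^ (n - k) := by
  refine ⟨fun hpos => ?_, fun h x hx0 hx1 => IsBernsteinNonneg.aeval_pos h hp ⟨hx0, hx1⟩⟩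
  obtain ⟨a, b, q, rfl, hq0, hq1⟩ := exists_eq_X_pow_mul_one_sub_X_pow_mul hp
  have hq : ∀ x ∈ Set.Ioo (0 : ℝ) 1, 0 < aeval x q := fun x hx => by
    refine pos_of_mul_pos_right (a := x ^ a * (1 - x) ^ b) ?_
      (mul_nonneg (pow_nonneg hx.1.le a) (pow_nonneg (sub_nonneg.2 hx.2.le) b))
    simpa using hpos x hx.1 hx.2
  have hqIcc := pos_on_Icc_of_pos_on_Ioo q.continuous_aeval zero_lt_one hq
    (by simpa [aeval_def, eval₂_at_zero, coeff_zero_eq_eval_zero] using hq0)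
    (by simpa [aeval_def, eval₂_at_one] using hq1)
  rw [mul_assoc]
  exact ((isBernsteinNonneg_of_pos_on_Icc hqIcc).one_sub_X_pow_mul b).X_pow_mul a
end
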